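/- Fix a real m > 0 and set p* = (m+1)^{−1/m}. Define S(a,b,c) = b + (1/2)[(c−b)^{m+1} − (b−a)^{m+1}]. If (a,b,c) and (a′,b′,c′) are triples of reals with 0 ≤ b−a ≤ p*, 0 ≤ c−b ≤ p*, 0 ≤ b′−a′ ≤ p*, 0 ≤ c′−b′ ≤ p*, and a ≤ a′, b ≤ b′, c ≤ c′, then S(a,b,c) ≤ S(a′,b′,c′). -/
import Mathlib

open Real Set in
lemma key_lip (m : ℝ) (hm : 0 < m) {x y : ℝ} (hx : 0 ≤ x) (hxy : x ≤ y)
    (hy : y ≤ (m + 1) ^ (-(1 / m) : ℝ)) :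
    y ^ (m + 1) - x ^ (m + 1) ≤ y - x := by
  have hm1 : (0:ℝ) < m + 1 := by linarith
  have hP : ((m + 1 : ℝ) ^ (-(1 / m) : ℝ)) ^ m = (m + 1)⁻¹ := by
    rw [← Real.rpow_mul hm1.le]
    rw [show (-(1 / m) * m) = (-1 : ℝ) by field_simp]
    exact Real.rpow_neg_one _
  have hderiv : ∀ t ∈ Icc x y, HasDerivWithinAt (fun t : ℝ => t ^ (m + 1))
      ((m + 1) * t ^ m) (Icc x y) t := by
    intro t _
    have := (Real.hasDerivAt_rpow_const (x := t) (p := m + 1)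
      (Or.inr (by linarith))).hasDerivWithinAt (s := Icc x y)
    simpa using this
  have hbound : ∀ t ∈ Ico x y, ‖(m + 1) * t ^ m‖ ≤ 1 := by
    intro t ht
    have ht0 : 0 ≤ t := le_trans hx ht.1
    have htP : t ≤ (m + 1) ^ (-(1 / m) : ℝ) := le_trans ht.2.le hy
    have h1 : t ^ m ≤ ((m + 1 : ℝ) ^ (-(1 / m) : ℝ)) ^ m :=
      Real.rpow_le_rpow ht0 htP hm.le
    have h2 : (m + 1) * t ^ m ≤ 1 := by
      rw [hP] at h1
      calc (m + 1) * t ^ m ≤ (m + 1) * (m + 1)⁻¹ := by nlinarith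
        _ = 1 := mul_inv_cancel₀ (by linarith)
    have h3 : 0 ≤ (m + 1) * t ^ m := by positivity
    rw [Real.norm_eq_abs, abs_of_nonneg h3]; exact h2
  have := norm_image_sub_le_of_norm_deriv_le_segment' hderiv hbound y
    (by exact ⟨hxy, le_refl y⟩)
  rw [Real.norm_eq_abs, one_mul] at this
  have := abs_le.mp this
  linarith [this.2]

theorem statement5 (m : ℝ) (hm : 0 < m)
    (a b c a' b' c' : ℝ)
    (hba : 0 ≤ b - a) (hba' : b - a ≤ (m + 1) ^ (-(1 / m) : ℝ))
    (hcb : 0 ≤ c - b) (hcb' : c - b ≤ (m + 1) ^ (-(1 / m) : ℝ))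
    (hba2 : 0 ≤ b' - a') (hba2' : b' - a' ≤ (m + 1) ^ (-(1 / m) : ℝ))
    (hcb2 : 0 ≤ c' - b') (hcb2' : c' - b' ≤ (m + 1) ^ (-(1 / m) : ℝ))
    (haa : a ≤ a') (hbb : b ≤ b') (hcc : c ≤ c') :
    b + (1 / 2) * ((c - b) ^ (m + 1) - (b - a) ^ (m + 1))
      ≤ b' + (1 / 2) * ((c' - b') ^ (m + 1) - (b' - a') ^ (m + 1)) := by
  have hm1 : (0:ℝ) ≤ m + 1 := by linarith
  -- bound the u-terms
  have hU : (b' - a') ^ (m + 1) - (b - a) ^ (m + 1) ≤ b' - b := by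
    rcases le_or_gt (b' - a') (b - a) with h | h
    · have := Real.rpow_le_rpow hba2 h hm1
      linarith
    · have := key_lip m hm hba h.le hba2'
      linarith
  have hV : (c - b) ^ (m + 1) - (c' - b') ^ (m + 1) ≤ b' - b := by
    rcases le_or_gt (c - b) (c' - b') with h | h
    · have := Real.rpow_le_rpow hcb h hm1
      linarith
    · have := key_lip m hm hcb2 h.le hcb'
      linarith
  linarith
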